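/- For a > 0 and S > 0, the function r(S,a) = -a²(1 + 10e^{-aS} + e^{-2aS})/(3(1-e^{-aS})²) together with x(S,T,a) = -3a - 6a(e^{-aS} + e^{-aT} - 3e^{-a(S+T)} + e^{-2a(S+T)})/((1-e^{-aS})(1-e^{-aT})(1-e^{-a(S+T)})) satisfies the PDE 2·x(S,T,a)² + 6·(∂_S x(S,T,a) + ∂_T x(S,T,a)) + 27·(r(S,a) + r(T,a)) = 0 for all S, T > 0. -/

import Mathlib

/-!
With `φ(s) = 1 / (e^{a s} - 1)` one has `x(S,T) = -3a - 6a (φ(S) + φ(T) - φ(S+T))` and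
`r(S) = -a² (1 + 12 φ(S) + 12 φ(S)²) / 3`. Since `φ' = -a φ (1 + φ)`, the left-hand side of the
PDE collapses to `144 a² (φ(S) φ(T) - φ(S+T) (1 + φ(S) + φ(T)))`, which vanishes by the addition
law `1 + 1/φ(S+T) = (1 + 1/φ(S)) (1 + 1/φ(T))`.
-/

open Real Filter Topology

noncomputable section

def scalingR (a s : ℝ) : ℝ :=
  -a ^ 2 * (1 + 10 * exp (-a * s) + exp (-2 * a * s)) / (3 * (1 - exp (-a * s)) ^ 2)

def scalingX (a s t : ℝ) : ℝ :=
  -3 * a - 6 * a *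
    (exp (-a * s) + exp (-a * t) - 3 * exp (-a * (s + t)) + exp (-2 * a * (s + t))) /
    ((1 - exp (-a * s)) * (1 - exp (-a * t)) * (1 - exp (-a * (s + t))))

/-- The Bose–Einstein factor `1 / (e^{a s} - 1)`, written in the variable `e^{-a s}`. -/
def boseFactor (a s : ℝ) : ℝ := exp (-a * s) / (1 - exp (-a * s))

variable {a s t : ℝ}

lemma one_sub_exp_neg_mul_ne_zero (h : a * s ≠ 0) : 1 - exp (-a * s) ≠ 0 := by
  rw [sub_ne_zero, ne_comm, Ne, exp_eq_one_iff, neg_mul, neg_eq_zero]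
  exact h

lemma hasDerivAt_boseFactor (h : a * s ≠ 0) :
    HasDerivAt (boseFactor a) (-a * boseFactor a s * (1 + boseFactor a s)) s := by
  have hne := one_sub_exp_neg_mul_ne_zero h
  have hexp : HasDerivAt (fun U => exp (-a * U)) (-a * exp (-a * s)) s := by
    simpa [mul_comm] using ((hasDerivAt_id s).const_mul (-a)).exp
  refine (hexp.div ((hasDerivAt_const s 1).sub hexp) hne).congr_deriv ?_
  simp only [boseFactor, Pi.sub_apply]
  generalize exp (-a * s) = u at *
  field_simp
  ring

lemma boseFactor_add (hs : a * s ≠ 0) (ht : a * t ≠ 0) (hst : a * (s + t) ≠ 0) :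
    boseFactor a (s + t) * (1 + boseFactor a s + boseFactor a t) =
      boseFactor a s * boseFactor a t := by
  have hs' := one_sub_exp_neg_mul_ne_zero hs
  have ht' := one_sub_exp_neg_mul_ne_zero ht
  have hst' := one_sub_exp_neg_mul_ne_zero hst
  simp only [boseFactor, mul_add, exp_add] at hst' ⊢
  generalize exp (-a * s) = u at *
  generalize exp (-a * t) = v at *
  field_simp
  ring

lemma scalingR_eq_boseFactor (h : a * s ≠ 0) :
    scalingR a s = -a ^ 2 * (1 + 12 * boseFactor a s + 12 * boseFactor a s ^ 2) / 3 := by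
  have hne := one_sub_exp_neg_mul_ne_zero h
  rw [scalingR, boseFactor, show -2 * a * s = -a * s + -a * s by ring, exp_add]
  generalize exp (-a * s) = u at *
  field_simp
  ring

lemma scalingX_eq_boseFactor (hs : a * s ≠ 0) (ht : a * t ≠ 0) (hst : a * (s + t) ≠ 0) :
    scalingX a s t =
      -3 * a - 6 * a * (boseFactor a s + boseFactor a t - boseFactor a (s + t)) := by
  have hs' := one_sub_exp_neg_mul_ne_zero hs
  have ht' := one_sub_exp_neg_mul_ne_zero ht
  have hst' := one_sub_exp_neg_mul_ne_zero hst
  rw [scalingX, show -2 * a * (s + t) = -a * (s + t) + -a * (s + t) by ring, exp_add]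
  simp only [boseFactor, mul_add, exp_add] at hst' ⊢
  generalize exp (-a * s) = u at *
  generalize exp (-a * t) = v at *
  field_simp
  ring

lemma scalingX_comm (a s t : ℝ) : scalingX a s t = scalingX a t s := by
  simp only [scalingX, add_comm s t]
  ring

lemma hasDerivAt_scalingX_left (hs : a * s ≠ 0) (ht : a * t ≠ 0) (hst : a * (s + t) ≠ 0) :
    HasDerivAt (fun U => scalingX a U t)
      (6 * a ^ 2 * (boseFactor a s * (1 + boseFactor a s)
        - boseFactor a (s + t) * (1 + boseFactor a (s + t)))) s := by
  have hφ := ((hasDerivAt_boseFactor hs).add_const (boseFactor a t)).sub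
    ((hasDerivAt_boseFactor hst).comp_add_const s t)
  have hx := (hφ.const_mul (6 * a)).const_sub (-3 * a)
  refine (hx.congr_deriv (by ring)).congr_of_eventuallyEq ?_
  have hs_ev := (show Continuous fun U => a * U by fun_prop).continuousAt.eventually_ne hs
  have hst_ev :=
    (show Continuous fun U => a * (U + t) by fun_prop).continuousAt.eventually_ne hst
  filter_upwards [hs_ev, hst_ev] with U hU hUt
  exact scalingX_eq_boseFactor hU ht hUt

end

theorem stmt_5 (a : ℝ) (ha : 0 < a)
    (r : ℝ → ℝ)
    (hr : ∀ S : ℝ, r S = -a ^ 2 * (1 + 10 * Real.exp (-a * S) + Real.exp (-2 * a * S)) /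
      (3 * (1 - Real.exp (-a * S)) ^ 2))
    (x : ℝ → ℝ → ℝ)
    (hx : ∀ U T : ℝ, x U T = -3 * a -
      6 * a * (Real.exp (-a * U) + Real.exp (-a * T) - 3 * Real.exp (-a * (U + T))
        + Real.exp (-2 * a * (U + T))) /
      ((1 - Real.exp (-a * U)) * (1 - Real.exp (-a * T)) * (1 - Real.exp (-a * (U + T))))) :
    ∀ S T : ℝ, 0 < S → 0 < T →
      2 * (x S T) ^ 2 +
        6 * (deriv (fun U : ℝ => x U T) S + deriv (fun V : ℝ => x S V) T) +
        27 * (r S + r T) = 0 := by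
  intro S T hS hT
  obtain rfl : r = scalingR a := funext hr
  obtain rfl : x = scalingX a := funext fun U => funext (hx U)
  have hS' := (mul_pos ha hS).ne'
  have hT' := (mul_pos ha hT).ne'
  have hST := (mul_pos ha (add_pos hS hT)).ne'
  have hTS := (mul_pos ha (add_pos hT hS)).ne'
  simp_rw [scalingX_comm a S]
  rw [(hasDerivAt_scalingX_left hS' hT' hST).deriv, (hasDerivAt_scalingX_left hT' hS' hTS).deriv,
    scalingX_eq_boseFactor hT' hS' hTS, scalingR_eq_boseFactor hS', scalingR_eq_boseFactor hT',
    add_comm T S]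
  linear_combination (-144 * a ^ 2) * boseFactor_add hS' hT' hST
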